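/- arXiv:1701.02872 — 4 statements merged into one kernel-verified Lean document; each statement's English description precedes it below -/
import Mathlib

section
/- Let $Y(z) = \sum_{k=0}^\infty y_k z^k$ be a power series with $y_k \ge 0$, $y_0 > 0$, $Y(1)=1$, $Y'(1) < 1$, analytic on $|z| < R$ with $R > 1$, and let $t_0 = \sup\{t \in (0,R) : Y'(t)t - Y(t) \le 0\}$. Then the function $z \mapsto Y(z)/z$ is injective on the punctured open disk $\{z \in \mathbb{C} : 0 < |z| < t_0\}$. -/
/-!
If `Y(a)/a = Y(b)/b` with `a ≠ b`, then `y₀ (a - b) = ∑_{k ≥ 1} y_k a b (a^(k-1) - b^(k-1))`, and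
bounding `‖a^(k-1) - b^(k-1)‖` by `(k-1) t^(k-2) ‖a - b‖` with `t = max ‖a‖ ‖b‖` gives
`y₀ ≤ H(t) := ∑_{k ≥ 1} (k-1) y_k t^k = t Y'(t) - Y(t) + y₀`. Since `t < t₀` there is `s > t` with
`s Y'(s) - Y(s) ≤ 0`, i.e. `H(s) ≤ y₀`; as every power in `H` is at least `1`,
`H(t) ≤ (t/s) H(s) < y₀`.
-/

open Set

open Finset in
theorem norm_pow_sub_pow_le {𝕜 : Type*} [SeminormedCommRing 𝕜] [NormOneClass 𝕜] {a b : 𝕜}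
    {t : ℝ} (ha : ‖a‖ ≤ t) (hb : ‖b‖ ≤ t) (n : ℕ) :
    ‖a ^ n - b ^ n‖ ≤ n * t ^ (n - 1) * ‖a - b‖ := by
  have ht : 0 ≤ t := (norm_nonneg a).trans ha
  have hterm : ∀ i ∈ range n, ‖a ^ i * b ^ (n - 1 - i)‖ ≤ t ^ (n - 1) := fun i hi => calc
    ‖a ^ i * b ^ (n - 1 - i)‖ ≤ ‖a‖ ^ i * ‖b‖ ^ (n - 1 - i) :=
      (norm_mul_le _ _).trans (mul_le_mul (norm_pow_le _ _) (norm_pow_le _ _)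
        (norm_nonneg _) (by positivity))
    _ ≤ t ^ i * t ^ (n - 1 - i) := by gcongr
    _ = t ^ (n - 1) := by rw [← pow_add, Nat.add_sub_cancel' (by grind)]
  calc ‖a ^ n - b ^ n‖
      ≤ ‖∑ i ∈ range n, a ^ i * b ^ (n - 1 - i)‖ * ‖a - b‖ := by
        rw [← geom_sum₂_mul]; exact norm_mul_le _ _
    _ ≤ n * t ^ (n - 1) * ‖a - b‖ := by
        gcongr
        simpa using norm_sum_le_of_le _ hterm

theorem norm_pow_succ_mul_sub_pow_succ_mul_le {𝕜 : Type*} [SeminormedCommRing 𝕜]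
    [NormOneClass 𝕜] {a b : 𝕜} {t : ℝ} (ha : ‖a‖ ≤ t) (hb : ‖b‖ ≤ t) (n : ℕ) :
    ‖a ^ (n + 1) * b - b ^ (n + 1) * a‖ ≤ n * t ^ (n + 1) * ‖a - b‖ := by
  rcases n with _ | n
  · simp [mul_comm]
  have ht : 0 ≤ t := (norm_nonneg a).trans ha
  calc ‖a ^ (n + 2) * b - b ^ (n + 2) * a‖ = ‖a * b * (a ^ (n + 1) - b ^ (n + 1))‖ := by ring_nf
    _ ≤ ‖a‖ * ‖b‖ * ‖a ^ (n + 1) - b ^ (n + 1)‖ :=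
      (norm_mul_le _ _).trans (by gcongr; exact norm_mul_le _ _)
    _ ≤ t * t * ((n + 1 : ℕ) * t ^ n * ‖a - b‖) := by
      gcongr
      exact norm_pow_sub_pow_le ha hb (n + 1)
    _ = (n + 1 : ℕ) * t ^ (n + 1 + 1) * ‖a - b‖ := by ring

theorem mul_le_mul_of_hasSum_mul_pow_succ {c : ℕ → ℝ} (hc : ∀ k, 0 ≤ c k) {t s A B : ℝ}
    (ht : 0 ≤ t) (hts : t ≤ s) (hA : HasSum (fun k => c k * t ^ (k + 1)) A)
    (hB : HasSum (fun k => c k * s ^ (k + 1)) B) : s * A ≤ t * B :=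
  hasSum_le (fun k => by
      have hpow : t ^ k ≤ s ^ k := by gcongr
      calc s * (c k * t ^ (k + 1)) = c k * (t * s) * t ^ k := by ring
        _ ≤ c k * (t * s) * s ^ k :=
          mul_le_mul_of_nonneg_left hpow (mul_nonneg (hc k) (mul_nonneg ht (ht.trans hts)))
        _ = t * (c k * s ^ (k + 1)) := by ring)
    (hA.mul_left s) (hB.mul_left t)

theorem exists_mem_lt_of_lt_sSup {S : Set ℝ} {t : ℝ} (ht : 0 ≤ t) (h : t < sSup S) :
    ∃ s ∈ S, t < s := by
  rcases S.eq_empty_or_nonempty with rfl | hS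
  · -- `sSup ∅ = 0` in `ℝ`
    exact absurd h (by simpa using ht)
  · exact exists_lt_of_lt_csSup hS h

theorem hasSum_coeff_succ_mul_pow_succ {y : ℕ → ℝ} {t : ℝ}
    (hY' : Summable (fun k : ℕ => (k : ℝ) * y k * t ^ (k - 1)))
    (hY : Summable (fun k : ℕ => y k * t ^ k)) :
    HasSum (fun k : ℕ => (k : ℝ) * y (k + 1) * t ^ (k + 1))
      ((∑' k : ℕ, (k : ℝ) * y k * t ^ (k - 1)) * t - ∑' k : ℕ, y k * t ^ k + y 0) := by
  have h := (hY'.mul_right t).hasSum.sub hY.hasSum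
  rw [tsum_mul_right, ← hasSum_nat_add_iff' 1] at h
  simp only [Finset.range_one, Finset.sum_singleton, Nat.add_sub_cancel] at h
  have hterm : (fun n : ℕ => ((n + 1 : ℕ) : ℝ) * y (n + 1) * t ^ n * t - y (n + 1) * t ^ (n + 1))
      = fun k : ℕ => (k : ℝ) * y (k + 1) * t ^ (k + 1) := by
    funext k; push_cast; ring
  rw [hterm] at h
  simpa only [Nat.cast_zero, zero_mul, pow_zero, mul_one, zero_sub, sub_neg_eq_add] using h

theorem coeff_zero_le_of_tsum_mul_eq {y : ℕ → ℝ} (hy : ∀ k, 0 ≤ y k) {a b : ℂ} (hab : a ≠ b)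
    {t H : ℝ} (ha : ‖a‖ ≤ t) (hb : ‖b‖ ≤ t)
    (hYa : Summable (fun k : ℕ => (y k : ℂ) * a ^ k))
    (hYb : Summable (fun k : ℕ => (y k : ℂ) * b ^ k))
    (heq : (∑' k : ℕ, (y k : ℂ) * a ^ k) * b = (∑' k : ℕ, (y k : ℂ) * b ^ k) * a)
    (hH : HasSum (fun k : ℕ => (k : ℝ) * y (k + 1) * t ^ (k + 1)) H) :
    y 0 ≤ H := by
  have hsum : HasSum (fun k : ℕ => (y k : ℂ) * (a ^ k * b - b ^ k * a)) 0 := by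
    have h := (hYa.mul_right b).hasSum.sub (hYb.mul_right a).hasSum
    rw [tsum_mul_right, tsum_mul_right, heq, sub_self] at h
    simpa only [mul_sub, mul_assoc] using h
  have htail : HasSum (fun k : ℕ => (y (k + 1) : ℂ) * (a ^ (k + 1) * b - b ^ (k + 1) * a))
      (y 0 * (a - b)) := by
    rw [← hasSum_nat_add_iff' 1] at hsum
    simpa [mul_comm a b, ← mul_neg] using hsum
  have hbound := htail.norm_le_of_bounded (hH.mul_right ‖a - b‖) fun k => calc
    ‖(y (k + 1) : ℂ) * (a ^ (k + 1) * b - b ^ (k + 1) * a)‖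
        = y (k + 1) * ‖a ^ (k + 1) * b - b ^ (k + 1) * a‖ := by
      rw [norm_mul, Complex.norm_real, Real.norm_of_nonneg (hy _)]
    _ ≤ y (k + 1) * (k * t ^ (k + 1) * ‖a - b‖) :=
      mul_le_mul_of_nonneg_left (norm_pow_succ_mul_sub_pow_succ_mul_le ha hb k) (hy _)
    _ = k * y (k + 1) * t ^ (k + 1) * ‖a - b‖ := by ring
  rw [norm_mul, Complex.norm_real, Real.norm_of_nonneg (hy 0)] at hbound
  exact le_of_mul_le_mul_right hbound (norm_pos_iff.2 (sub_ne_zero.2 hab))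

theorem fctl_Y_div_z_injective_general (y : ℕ → ℝ) (R : ℝ)
    (hy : ∀ k, 0 ≤ y k) (hy0 : 0 < y 0)
    (hconv : ∀ z : ℂ, ‖z‖ < R → Summable (fun k : ℕ => (y k : ℂ) * z ^ k))
    (hconv' : ∀ t : ℝ, 0 < t → t < R →
      Summable (fun k : ℕ => (k : ℝ) * y k * t ^ (k - 1)))
    (t0 : ℝ)
    (ht0 : t0 = sSup {t : ℝ | t ∈ Ioo 0 R ∧
      (∑' k : ℕ, (k : ℝ) * y k * t ^ (k - 1)) * t - (∑' k : ℕ, y k * t ^ k) ≤ 0}) :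
    InjOn (fun z : ℂ => (∑' k : ℕ, (y k : ℂ) * z ^ k) / z)
      {z : ℂ | 0 < ‖z‖ ∧ ‖z‖ < t0} := by
  intro a ⟨ha0, hat0⟩ b ⟨hb0, hbt0⟩ heq
  by_contra hab
  set t := max ‖a‖ ‖b‖
  have ht : 0 < t := ha0.trans_le (le_max_left _ _)
  obtain ⟨s, ⟨⟨hs0, hsR⟩, hs⟩, hts⟩ :=
    exists_mem_lt_of_lt_sSup ht.le (ht0 ▸ max_lt hat0 hbt0 : t < _)
  have hH : ∀ r, 0 < r → r < R → HasSum (fun k : ℕ => (k : ℝ) * y (k + 1) * r ^ (k + 1))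
      ((∑' k : ℕ, (k : ℝ) * y k * r ^ (k - 1)) * r - ∑' k : ℕ, y k * r ^ k + y 0) :=
    fun r hr hrR => hasSum_coeff_succ_mul_pow_succ (hconv' r hr hrR) <|
      Complex.summable_ofReal.mp <| by
        simpa using hconv r (by rwa [Complex.norm_real, Real.norm_of_nonneg hr.le])
  have htR : t < R := hts.trans hsR
  have hcmp := mul_le_mul_of_hasSum_mul_pow_succ (fun k => mul_nonneg k.cast_nonneg (hy _))
    ht.le hts.le (hH t ht htR) (hH s hs0 hsR)
  have hy0le := coeff_zero_le_of_tsum_mul_eq hy hab (le_max_left _ _) (le_max_right _ _)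
    (hconv a ((le_max_left _ _).trans_lt htR)) (hconv b ((le_max_right _ _).trans_lt htR))
    ((div_eq_div_iff (norm_pos_iff.1 ha0) (norm_pos_iff.1 hb0)).1 heq) (hH t ht htR)
  -- `s y₀ ≤ s H(t) ≤ t H(s) ≤ t y₀ < s y₀`
  nlinarith

/-- for a PGF `Y` with `y₀ > 0`, `Y(1)=1`, `Y'(1)<1`, analytic on
`|z| < R` with `R > 1`, the map `z ↦ Y(z)/z` is injective on the punctured
open disk `{z : 0 < |z| < t₀}`, where
`t₀ = sup {t ∈ (0,R) : Y'(t)·t - Y(t) ≤ 0}`. -/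
theorem fctl_Y_div_z_injective (y : ℕ → ℝ) (R : ℝ) (hR : 1 < R)
    (hy : ∀ k, 0 ≤ y k) (hy0 : 0 < y 0)
    (hconv : ∀ z : ℂ, ‖z‖ < R → Summable (fun k : ℕ => (y k : ℂ) * z ^ k))
    (hconv' : ∀ t : ℝ, 0 < t → t < R →
      Summable (fun k : ℕ => (k : ℝ) * y k * t ^ (k - 1)))
    (hY1 : ∑' k : ℕ, y k = 1) (hY'1 : ∑' k : ℕ, (k : ℝ) * y k < 1)
    (t0 : ℝ)
    (ht0 : t0 = sSup {t : ℝ | t ∈ Ioo 0 R ∧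
      (∑' k : ℕ, (k : ℝ) * y k * t ^ (k - 1)) * t - (∑' k : ℕ, y k * t ^ k) ≤ 0}) :
    InjOn (fun z : ℂ => (∑' k : ℕ, (y k : ℂ) * z ^ k) / z)
      {z : ℂ | 0 < ‖z‖ ∧ ‖z‖ < t0} :=
  fctl_Y_div_z_injective_general y R hy hy0 hconv hconv' t0 ht0
end

section
/- Let $Y$ be a PGF with $y_0 > 0$, $Y'(1) < 1$, analytic on $|z| < R$, $R > 1$, and $t_0 > 1$ as defined. Fix real $w$ with $1 < w < t_0$ and complex $z$ with $|z| < t_0$. Then $\frac{wY(z) - zY(w)}{Y(z) - z} \in (-\infty, 0]$ (as a real number) if and only if $z$ is real with $1 \le z \le w$. -/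
/-!
Write `g(t) = Y(t)/t`. The function `Y'(t) - g(t) = ∑ (k - 1) yₖ t^(k-1)` is strictly increasing
(its `k = 0` term is `-y₀/t`), so `Y'(t) < g(t)` on `(0, t₀)`; together with the bound
`|Y(u) - Y(v)| ≤ Y'(ρ) |u - v|` for `|u|, |v| ≤ ρ` this makes `g` strictly decreasing on `(0, t₀)`.

If the quotient is a real `a ≤ 0`, then `Y(z) = c z` for a real `c` between `g(w)` and `g(1) = 1`,
so `c = g(τ)` for some `τ ∈ [1, w]`. From `|Y(z)| ≤ Y(|z|)` and the monotonicity of `g` we get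
`|z| ≤ τ`, and then `|c| |z - τ| = |Y(z) - Y(τ)| ≤ Y'(τ) |z - τ|` with `Y'(τ) < c` forces `z = τ`.
Conversely, for `z = x ∈ [1, w]` the numerator is `≥ 0` and the denominator `≤ 0` because `g`
decreases.
-/

open Set Metric

theorem norm_pow_sub_pow_le_s6 {A : Type*} [NormedRing A] [NormOneClass A] {ρ : ℝ} {u v : A}
    (hu : ‖u‖ ≤ ρ) (hv : ‖v‖ ≤ ρ) (k : ℕ) :
    ‖u ^ k - v ^ k‖ ≤ k * ρ ^ (k - 1) * ‖u - v‖ := by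
  induction k with
  | zero => simp
  | succ n ih =>
    have hun : ‖u ^ n‖ ≤ ρ ^ n := (norm_pow_le u n).trans (pow_le_pow_left₀ (norm_nonneg u) hu n)
    have hρ : (n : ℝ) * ρ ^ (n - 1) * ρ = n * ρ ^ n := by
      cases n <;> simp [pow_succ, mul_assoc]
    calc ‖u ^ (n + 1) - v ^ (n + 1)‖ = ‖u ^ n * (u - v) + (u ^ n - v ^ n) * v‖ := by
          congr 1; noncomm_ring
      _ ≤ ‖u ^ n‖ * ‖u - v‖ + ‖u ^ n - v ^ n‖ * ‖v‖ :=
          norm_add_le_of_le (norm_mul_le _ _) (norm_mul_le _ _)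
      _ ≤ ρ ^ n * ‖u - v‖ + (n * ρ ^ (n - 1) * ‖u - v‖) * ρ := by
          gcongr
          exact (norm_nonneg _).trans ih
      _ = ((n + 1 : ℕ) : ℝ) * ρ ^ (n + 1 - 1) * ‖u - v‖ := by
          rw [mul_right_comm _ ‖u - v‖, hρ]; push_cast; ring

theorem exists_eq_ofReal_mul_of_div_eq_nonpos {w Yw a : ℝ} (hw : 0 < w) (hYw : Yw ≤ w)
    (ha : a ≤ 0) {Yz z : ℂ} (h : (w * Yz - z * Yw) / (Yz - z) = a) :
    ∃ c : ℝ, Yw / w ≤ c ∧ c ≤ 1 ∧ Yz = c * z := by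
  rcases eq_or_ne (Yz - z) 0 with hden | hden
  · exact ⟨1, (div_le_one hw).2 hYw, le_rfl, by simpa [sub_eq_zero] using hden⟩
  have hwa : 0 < w - a := by linarith
  refine ⟨(Yw - a) / (w - a), ?_, (div_le_one hwa).2 (by linarith), ?_⟩
  · rw [div_le_div_iff₀ hw hwa]
    nlinarith
  · rw [div_eq_iff hden] at h
    have hwa' : (w : ℂ) - a ≠ 0 := by exact_mod_cast hwa.ne'
    push_cast
    field_simp
    linear_combination h

theorem Real.exists_gt_of_lt_sSup {S : Set ℝ} {t : ℝ} (ht : 0 ≤ t) (htS : t < sSup S) :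
    ∃ s ∈ S, t < s := by
  refine exists_lt_of_lt_csSup (nonempty_iff_ne_empty.2 fun hS => ?_) htS
  rw [hS, Real.sSup_empty] at htS
  linarith

theorem sub_one_mul_pow_div_le (k : ℕ) {t s : ℝ} (ht : 0 < t) (hts : t ≤ s) :
    ((k : ℝ) - 1) * t ^ k / t ≤ ((k : ℝ) - 1) * s ^ k / s := by
  cases k with
  | zero => simpa [neg_div] using inv_anti₀ ht hts
  | succ n =>
    have h : ∀ r : ℝ, 0 < r → ((n + 1 : ℕ) - 1 : ℝ) * r ^ (n + 1) / r = n * r ^ n := fun r hr => by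
      field_simp; push_cast; ring
    rw [h t ht, h s (ht.trans_le hts)]
    gcongr

noncomputable def pgf (𝕜 : Type*) [RCLike 𝕜] (y : ℕ → ℝ) (u : 𝕜) : 𝕜 :=
  ∑' k, (y k : 𝕜) * u ^ k

noncomputable def pgfDeriv (y : ℕ → ℝ) (t : ℝ) : ℝ :=
  ∑' k : ℕ, (k : ℝ) * y k * t ^ (k - 1)

section
variable {𝕜 : Type*} [RCLike 𝕜] {y : ℕ → ℝ}

theorem pgf_zero : pgf 𝕜 y 0 = y 0 := by
  rw [pgf, tsum_eq_single 0 fun k hk => by rw [zero_pow hk, mul_zero]]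
  simp

theorem pgf_complex_ofReal (t : ℝ) : pgf ℂ y t = pgf ℝ y t := by
  rw [pgf, pgf, Complex.ofReal_tsum]
  push_cast
  rfl

theorem norm_ofReal_mul_pow_le (hy : ∀ k, 0 ≤ y k) {ρ : ℝ} {u : 𝕜} (hu : ‖u‖ ≤ ρ) (k : ℕ) :
    ‖(y k : 𝕜) * u ^ k‖ ≤ y k * ρ ^ k := by
  rw [norm_mul, norm_pow, RCLike.norm_ofReal, abs_of_nonneg (hy k)]
  exact mul_le_mul_of_nonneg_left (pow_le_pow_left₀ (norm_nonneg u) hu k) (hy k)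

theorem summable_pgf (hy : ∀ k, 0 ≤ y k) {ρ : ℝ} (hρ : Summable fun k => y k * ρ ^ k)
    {u : 𝕜} (hu : ‖u‖ ≤ ρ) : Summable fun k => (y k : 𝕜) * u ^ k :=
  hρ.of_norm_bounded (norm_ofReal_mul_pow_le hy hu)

theorem norm_pgf_le (hy : ∀ k, 0 ≤ y k) {u : 𝕜} (hu : Summable fun k => y k * ‖u‖ ^ k) :
    ‖pgf 𝕜 y u‖ ≤ pgf ℝ y ‖u‖ :=
  tsum_of_norm_bounded hu.hasSum (norm_ofReal_mul_pow_le hy le_rfl)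

theorem continuousOn_pgf (hy : ∀ k, 0 ≤ y k) {ρ : ℝ} (hρ : Summable fun k => y k * ρ ^ k) :
    ContinuousOn (pgf 𝕜 y) (closedBall 0 ρ) :=
  continuousOn_tsum (fun k => by fun_prop) hρ fun k u hu =>
    norm_ofReal_mul_pow_le hy (mem_closedBall_zero_iff.mp hu) k

theorem norm_pgf_sub_le (hy : ∀ k, 0 ≤ y k) {ρ : ℝ} (hρ : Summable fun k => y k * ρ ^ k)
    (hρ' : Summable fun k : ℕ => (k : ℝ) * y k * ρ ^ (k - 1)) {u v : 𝕜}
    (hu : ‖u‖ ≤ ρ) (hv : ‖v‖ ≤ ρ) :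
    ‖pgf 𝕜 y u - pgf 𝕜 y v‖ ≤ pgfDeriv y ρ * ‖u - v‖ := by
  have hterm : ∀ k, ‖(y k : 𝕜) * u ^ k - (y k : 𝕜) * v ^ k‖ ≤
      (k : ℝ) * y k * ρ ^ (k - 1) * ‖u - v‖ := fun k => by
    rw [← mul_sub, norm_mul, RCLike.norm_ofReal, abs_of_nonneg (hy k)]
    calc y k * ‖u ^ k - v ^ k‖ ≤ y k * (k * ρ ^ (k - 1) * ‖u - v‖) :=
          mul_le_mul_of_nonneg_left (norm_pow_sub_pow_le_s6 hu hv k) (hy k)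
      _ = (k : ℝ) * y k * ρ ^ (k - 1) * ‖u - v‖ := by ring
  rw [pgf, pgf, ← (summable_pgf hy hρ hu).tsum_sub (summable_pgf hy hρ hv), pgfDeriv,
    ← tsum_mul_right]
  exact tsum_of_norm_bounded (hρ'.mul_right _).hasSum hterm


theorem hasSum_pgfDeriv_sub_pgf_div {t : ℝ} (hY : Summable fun k => y k * t ^ k)
    (hD : Summable fun k : ℕ => (k : ℝ) * y k * t ^ (k - 1)) (ht : t ≠ 0) :
    HasSum (fun k : ℕ => y k * (((k : ℝ) - 1) * t ^ k / t)) (pgfDeriv y t - pgf ℝ y t / t) := by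
  have hterm : (fun k : ℕ => y k * (((k : ℝ) - 1) * t ^ k / t)) =
      fun k : ℕ => (k : ℝ) * y k * t ^ (k - 1) - y k * t ^ k / t := by
    funext k
    rcases k with _ | n
    · simp only [Nat.cast_zero, pow_zero]; ring
    · rw [pow_succ, Nat.add_sub_cancel]; field_simp
  rw [hterm]
  exact hD.hasSum.sub (hY.hasSum.div_const t)

theorem pgfDeriv_sub_pgf_div_lt (hy : ∀ k, 0 ≤ y k) (hy0 : 0 < y 0) {t s : ℝ} (ht : 0 < t)
    (hts : t < s) (hYt : Summable fun k => y k * t ^ k)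
    (hDt : Summable fun k : ℕ => (k : ℝ) * y k * t ^ (k - 1)) (hYs : Summable fun k => y k * s ^ k)
    (hDs : Summable fun k : ℕ => (k : ℝ) * y k * s ^ (k - 1)) :
    pgfDeriv y t - pgf ℝ y t / t < pgfDeriv y s - pgf ℝ y s / s :=
  hasSum_lt (i := 0)
    (fun k => mul_le_mul_of_nonneg_left (sub_one_mul_pow_div_le k ht hts.le) (hy k))
    (by simpa [neg_div] using mul_lt_mul_of_pos_left (inv_strictAnti₀ ht hts) hy0)
    (hasSum_pgfDeriv_sub_pgf_div hYt hDt ht.ne')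
    (hasSum_pgfDeriv_sub_pgf_div hYs hDs (ht.trans hts).ne')

theorem strictAntiOn_pgf_div (hy : ∀ k, 0 ≤ y k) {T : ℝ}
    (hY : ∀ t ∈ Ioo 0 T, Summable fun k => y k * t ^ k)
    (hD : ∀ t ∈ Ioo 0 T, Summable fun k : ℕ => (k : ℝ) * y k * t ^ (k - 1))
    (hψ : ∀ t ∈ Ioo 0 T, pgfDeriv y t < pgf ℝ y t / t) :
    StrictAntiOn (fun t => pgf ℝ y t / t) (Ioo 0 T) := by
  intro s hs t ht hst
  have hlip : pgf ℝ y t - pgf ℝ y s ≤ pgfDeriv y t * (t - s) := by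
    have h := norm_pgf_sub_le hy (hY t ht) (hD t ht) (le_of_eq (Real.norm_of_nonneg ht.1.le))
      (v := s) (by rw [Real.norm_of_nonneg hs.1.le]; exact hst.le)
    rw [Real.norm_of_nonneg (sub_pos.2 hst).le] at h
    exact (Real.le_norm_self _).trans h
  have hψt := (lt_div_iff₀ ht.1).1 (hψ t ht)
  rw [div_lt_div_iff₀ ht.1 hs.1]
  nlinarith [mul_lt_mul_of_pos_right hψt (sub_pos.2 hst), mul_le_mul_of_nonneg_right hlip ht.1.le]

theorem continuousOn_pgf_div (hy : ∀ k, 0 ≤ y k) {a b : ℝ} (ha : 0 < a)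
    (hb : Summable fun k => y k * b ^ k) :
    ContinuousOn (fun t => pgf ℝ y t / t) (Icc a b) := by
  refine ((continuousOn_pgf hy hb).mono fun t ht => ?_).div continuousOn_id
    fun t ht => (ha.trans_le ht.1).ne'
  rw [mem_closedBall_zero_iff, Real.norm_of_nonneg (ha.le.trans ht.1)]
  exact ht.2

theorem eq_of_pgf_eq_div_mul (hy : ∀ k, 0 ≤ y k) (hy0 : 0 < y 0) {T : ℝ}
    (hY : ∀ t ∈ Ioo 0 T, Summable fun k => y k * t ^ k)
    (hD : ∀ t ∈ Ioo 0 T, Summable fun k : ℕ => (k : ℝ) * y k * t ^ (k - 1))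
    (hψ : ∀ t ∈ Ioo 0 T, pgfDeriv y t < pgf ℝ y t / t) {τ : ℝ} (hτ : τ ∈ Ioo 0 T) {z : ℂ}
    (hz : ‖z‖ < T) (hYz : pgf ℂ y z = (pgf ℝ y τ / τ : ℝ) * z) : z = τ := by
  set c := pgf ℝ y τ / τ with hc
  have hz0 : z ≠ 0 := by
    rintro rfl
    rw [pgf_zero, mul_zero] at hYz
    exact hy0.ne' (RCLike.ofReal_eq_zero.1 hYz)
  have hz' : ‖z‖ ∈ Ioo 0 T := ⟨norm_pos_iff.2 hz0, hz⟩
  have hzτ : ‖z‖ ≤ τ := by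
    by_contra! h
    have h1 : pgf ℝ y ‖z‖ < c * ‖z‖ :=
      (div_lt_iff₀ hz'.1).1 (strictAntiOn_pgf_div hy hY hD hψ hτ hz' h)
    have h2 : c * ‖z‖ ≤ pgf ℝ y ‖z‖ := calc
      c * ‖z‖ ≤ ‖(c : ℂ) * z‖ := by
        rw [norm_mul, Complex.norm_real]; gcongr; exact Real.le_norm_self c
      _ = ‖pgf ℂ y z‖ := by rw [hYz]
      _ ≤ pgf ℝ y ‖z‖ := norm_pgf_le hy (hY _ hz')
    linarith
  have hYτ : pgf ℂ y τ = c * τ := by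
    rw [pgf_complex_ofReal, hc, ← Complex.ofReal_mul, div_mul_cancel₀ _ hτ.1.ne']
  have hlip := norm_pgf_sub_le hy (hY τ hτ) (hD τ hτ) hzτ
    (le_of_eq (by rw [Complex.norm_real, Real.norm_of_nonneg hτ.1.le]))
  rw [hYz, hYτ, ← mul_sub, norm_mul, Complex.norm_real] at hlip
  by_contra hne
  have hc_le := le_of_mul_le_mul_right hlip (norm_pos_iff.2 (sub_ne_zero.2 hne))
  linarith [Real.le_norm_self c, hψ τ hτ]

theorem pgfDeriv_lt_pgf_div_of_lt_sSup (hy : ∀ k, 0 ≤ y k) (hy0 : 0 < y 0) {R : ℝ}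
    (hY : ∀ t : ℝ, 0 ≤ t → t < R → Summable fun k => y k * t ^ k)
    (hD : ∀ t : ℝ, 0 < t → t < R → Summable fun k : ℕ => (k : ℝ) * y k * t ^ (k - 1))
    {t : ℝ} (ht : 0 < t)
    (htS : t < sSup {s | s ∈ Ioo 0 R ∧ pgfDeriv y s * s - pgf ℝ y s ≤ 0}) :
    pgfDeriv y t < pgf ℝ y t / t := by
  obtain ⟨s, ⟨⟨hs, hsR⟩, hφs⟩, hts⟩ := Real.exists_gt_of_lt_sSup ht.le htS
  have htR := hts.trans hsR
  have hψs : pgfDeriv y s - pgf ℝ y s / s ≤ 0 := by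
    rw [sub_nonpos, le_div_iff₀ hs]
    linarith
  have := pgfDeriv_sub_pgf_div_lt hy hy0 ht hts (hY t ht.le htR) (hD t ht htR) (hY s hs.le hsR)
    (hD s hs hsR)
  linarith

end

theorem fctl_negative_real_values_general (y : ℕ → ℝ) (R : ℝ)
    (hy : ∀ k, 0 ≤ y k) (hy0 : 0 < y 0)
    (hconv : ∀ z : ℂ, ‖z‖ < R → Summable (fun k : ℕ => (y k : ℂ) * z ^ k))
    (hconv' : ∀ t : ℝ, 0 < t → t < R →
      Summable (fun k : ℕ => (k : ℝ) * y k * t ^ (k - 1)))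
    (hY1 : ∑' k : ℕ, y k = 1)
    (t0 : ℝ)
    (ht0 : t0 = sSup {t : ℝ | t ∈ Ioo 0 R ∧
      (∑' k : ℕ, (k : ℝ) * y k * t ^ (k - 1)) * t - (∑' k : ℕ, y k * t ^ k) ≤ 0})
    (w : ℝ) (hw1 : 1 < w) (hwt0 : w < t0)
    (z : ℂ) (hz : ‖z‖ < t0) :
    (∃ a : ℝ, a ≤ 0 ∧
        ((w : ℂ) * (∑' k : ℕ, (y k : ℂ) * z ^ k) - z * (∑' k : ℕ, (y k : ℂ) * (w : ℂ) ^ k)) /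
          ((∑' k : ℕ, (y k : ℂ) * z ^ k) - z) = (a : ℂ)) ↔
      (∃ x : ℝ, 1 ≤ x ∧ x ≤ w ∧ z = (x : ℂ)) := by
  change (∃ a : ℝ, a ≤ 0 ∧ ((w : ℂ) * pgf ℂ y z - z * pgf ℂ y w) / (pgf ℂ y z - z) = a) ↔ _
  change t0 = sSup {t : ℝ | t ∈ Ioo 0 R ∧ pgfDeriv y t * t - pgf ℝ y t ≤ 0} at ht0
  obtain ⟨s, ⟨⟨hs0, hsR⟩, -⟩, -⟩ := Real.exists_gt_of_lt_sSup zero_le_one (ht0 ▸ hw1.trans hwt0)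
  have ht0R : t0 ≤ R := ht0 ▸ Real.sSup_le (fun t ht => ht.1.2.le) (hs0.trans hsR).le
  have hY : ∀ t : ℝ, 0 ≤ t → t < R → Summable fun k => y k * t ^ k := fun t ht htR =>
    Complex.summable_ofReal.1 <| by
      simpa using hconv t (by rwa [Complex.norm_real, Real.norm_of_nonneg ht])
  have hY' : ∀ t ∈ Ioo 0 t0, Summable fun k => y k * t ^ k := fun t ht =>
    hY t ht.1.le (ht.2.trans_le ht0R)
  have hD' : ∀ t ∈ Ioo 0 t0, Summable fun k : ℕ => (k : ℝ) * y k * t ^ (k - 1) := fun t ht =>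
    hconv' t ht.1 (ht.2.trans_le ht0R)
  have hψ : ∀ t ∈ Ioo 0 t0, pgfDeriv y t < pgf ℝ y t / t := fun t ht =>
    pgfDeriv_lt_pgf_div_of_lt_sSup hy hy0 hY hconv' ht.1 (ht0 ▸ ht.2)
  have hanti := strictAntiOn_pgf_div hy hY' hD' hψ
  have h1 : (1 : ℝ) ∈ Ioo 0 t0 := ⟨one_pos, hw1.trans hwt0⟩
  have hw : w ∈ Ioo 0 t0 := ⟨h1.1.trans hw1, hwt0⟩
  have hg1 : pgf ℝ y 1 / 1 = 1 := by simpa [pgf] using hY1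
  have hgw : pgf ℝ y w / w < 1 := hg1 ▸ hanti h1 hw hw1
  constructor
  · rintro ⟨a, ha, hq⟩
    rw [pgf_complex_ofReal] at hq
    obtain ⟨c, hcw, hc1, hYz⟩ :=
      exists_eq_ofReal_mul_of_div_eq_nonpos hw.1 ((div_le_one hw.1).1 hgw.le) ha hq
    obtain ⟨τ, hτ, rfl⟩ := intermediate_value_Icc' hw1.le
      (continuousOn_pgf_div hy one_pos (hY' w hw)) ⟨hcw, hg1.symm ▸ hc1⟩
    exact ⟨τ, hτ.1, hτ.2, eq_of_pgf_eq_div_mul hy hy0 hY' hD' hψ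
      ⟨one_pos.trans_le hτ.1, hτ.2.trans_lt hwt0⟩ hz hYz⟩
  · rintro ⟨x, hx1, hxw, rfl⟩
    have hx : x ∈ Ioo 0 t0 := ⟨one_pos.trans_le hx1, hxw.trans_lt hwt0⟩
    have hnum : 0 ≤ w * pgf ℝ y x - x * pgf ℝ y w := by
      have := hanti.antitoneOn hx hw hxw
      rw [div_le_div_iff₀ hw.1 hx.1] at this
      linarith
    have hden : pgf ℝ y x - x ≤ 0 := by
      have := hanti.antitoneOn h1 hx hx1
      rw [hg1, div_le_one hx.1] at this
      linarith
    refine ⟨_, div_nonpos_of_nonneg_of_nonpos hnum hden, ?_⟩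
    rw [pgf_complex_ofReal, pgf_complex_ofReal]
    push_cast
    rfl

/-- for a PGF `Y` with `y₀ > 0`, `Y'(1) < 1`, `t₀ > 1`,
fixed real `w ∈ (1,t₀)` and complex `|z| < t₀`, the quantity
`(wY(z) - zY(w))/(Y(z) - z)` lies in `(-∞,0]` iff `z` is real with `1 ≤ z ≤ w`. -/
theorem fctl_negative_real_values (y : ℕ → ℝ) (R : ℝ) (hR : 1 < R)
    (hy : ∀ k, 0 ≤ y k) (hy0 : 0 < y 0)
    (hconv : ∀ z : ℂ, ‖z‖ < R → Summable (fun k : ℕ => (y k : ℂ) * z ^ k))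
    (hconv' : ∀ t : ℝ, 0 < t → t < R →
      Summable (fun k : ℕ => (k : ℝ) * y k * t ^ (k - 1)))
    (hY1 : ∑' k : ℕ, y k = 1) (hY'1 : ∑' k : ℕ, (k : ℝ) * y k < 1)
    (t0 : ℝ)
    (ht0 : t0 = sSup {t : ℝ | t ∈ Ioo 0 R ∧
      (∑' k : ℕ, (k : ℝ) * y k * t ^ (k - 1)) * t - (∑' k : ℕ, y k * t ^ k) ≤ 0})
    (ht0gt : 1 < t0)
    (w : ℝ) (hw1 : 1 < w) (hwt0 : w < t0)
    (z : ℂ) (hz : ‖z‖ < t0) :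
    (∃ a : ℝ, a ≤ 0 ∧
        ((w : ℂ) * (∑' k : ℕ, (y k : ℂ) * z ^ k) - z * (∑' k : ℕ, (y k : ℂ) * (w : ℂ) ^ k)) /
          ((∑' k : ℕ, (y k : ℂ) * z ^ k) - z) = (a : ℂ)) ↔
      (∃ x : ℝ, 1 ≤ x ∧ x ≤ w ∧ z = (x : ℂ)) :=
  fctl_negative_real_values_general y R hy hy0 hconv hconv' hY1 t0 ht0 w hw1 hwt0 z hz
end

section
/- Let $Y$ be a PGF with $y_0 > 0$, $Y'(1) < 1$, and $t_0 > 1$. For real $w$ with $1 < w < t_0$ and real $z$ with $-1 < z < 1$, one has $\frac{wY(z) - zY(w)}{Y(z) - z} > 0$. -/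
open Set

/-- for a PGF `Y` with `y₀ > 0`, `Y'(1) < 1`, `t₀ > 1`,
real `w ∈ (1,t₀)` and real `z ∈ (-1,1)`:
`(wY(z) - zY(w))/(Y(z) - z) > 0`. -/
theorem fctl_fraction_pos (y : ℕ → ℝ) (R : ℝ) (hR : 1 < R)
    (hy : ∀ k, 0 ≤ y k) (hy0 : 0 < y 0)
    (hconv : ∀ t : ℝ, -R < t → t < R → Summable (fun k : ℕ => y k * t ^ k))
    (hconv' : ∀ t : ℝ, 0 < t → t < R →
      Summable (fun k : ℕ => (k : ℝ) * y k * t ^ (k - 1)))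
    (hY1 : ∑' k : ℕ, y k = 1) (hY'1 : ∑' k : ℕ, (k : ℝ) * y k < 1)
    (t0 : ℝ)
    (ht0 : t0 = sSup {t : ℝ | t ∈ Ioo 0 R ∧
      (∑' k : ℕ, (k : ℝ) * y k * t ^ (k - 1)) * t - (∑' k : ℕ, y k * t ^ k) ≤ 0})
    (ht0gt : 1 < t0)
    (w : ℝ) (hw1 : 1 < w) (hwt0 : w < t0)
    (z : ℝ) (hz1 : -1 < z) (hz2 : z < 1) :
    0 < (w * (∑' k : ℕ, y k * z ^ k) - z * (∑' k : ℕ, y k * w ^ k)) /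
        ((∑' k : ℕ, y k * z ^ k) - z) := by
  -- basic summabilities
  have sumy : Summable y := by simpa using hconv 1 (by linarith) hR
  have sumK1 : Summable (fun k : ℕ => (k : ℝ) * y k) := by
    simpa using hconv' 1 one_pos hR
  have sumYz : Summable (fun k : ℕ => y k * z ^ k) := hconv z (by linarith) (by linarith)
  -- the set S and a point s above w
  set S : Set ℝ := {t : ℝ | t ∈ Ioo 0 R ∧
      (∑' k : ℕ, (k : ℝ) * y k * t ^ (k - 1)) * t - (∑' k : ℕ, y k * t ^ k) ≤ 0} with hS
  have hSne : S.Nonempty := by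
    by_contra h
    rw [Set.not_nonempty_iff_eq_empty] at h
    rw [h, Real.sSup_empty] at ht0
    linarith
  have hSbdd : BddAbove S := ⟨R, fun t ht => le_of_lt ht.1.2⟩
  obtain ⟨s, hsS, hws⟩ : ∃ s ∈ S, w < s :=
    exists_lt_of_lt_csSup hSne (ht0 ▸ hwt0)
  obtain ⟨⟨hs0, hsR⟩, hhs⟩ := hsS
  have hwR : w < R := lt_trans hws hsR
  have sumYw : Summable (fun k : ℕ => y k * w ^ k) := hconv w (by linarith) hwR
  have sumYs : Summable (fun k : ℕ => y k * s ^ k) := hconv s (by linarith) hsR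
  have hsumK : ∀ t : ℝ, 0 < t → t < R → Summable (fun k : ℕ => (k : ℝ) * y k * t ^ k) := by
    intro t ht htR
    apply ((hconv' t ht htR).mul_right t).congr
    intro k
    cases k with
    | zero => simp
    | succ n => simp only [Nat.succ_sub_one, pow_succ]; ring
  have hkey : ∀ t : ℝ, (∑' k : ℕ, (k : ℝ) * y k * t ^ (k - 1)) * t
      = ∑' k : ℕ, (k : ℝ) * y k * t ^ k := by
    intro t
    rw [← tsum_mul_right]
    apply tsum_congr
    intro k
    cases k with
    | zero => simp
    | succ n => simp only [Nat.succ_sub_one, pow_succ]; ring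
  -- Denominator: z < Y(z)
  have habs : ∀ k : ℕ, |y k * (∑ j ∈ Finset.range k, z ^ j)| ≤ (k : ℝ) * y k := by
    intro k
    rw [abs_mul, abs_of_nonneg (hy k)]
    have h1 : |∑ j ∈ Finset.range k, z ^ j| ≤ (k : ℝ) := by
      calc |∑ j ∈ Finset.range k, z ^ j| ≤ ∑ j ∈ Finset.range k, |z ^ j| :=
            Finset.abs_sum_le_sum_abs _ _
        _ ≤ ∑ _j ∈ Finset.range k, (1 : ℝ) := by
            apply Finset.sum_le_sum
            intro j _
            rw [abs_pow]
            exact pow_le_one₀ (abs_nonneg z) (by rw [abs_le]; constructor <;> linarith)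
        _ = (k : ℝ) := by simp
    nlinarith [hy k, abs_nonneg (∑ j ∈ Finset.range k, z ^ j)]
  have hsumT : Summable (fun k : ℕ => y k * (∑ j ∈ Finset.range k, z ^ j)) := by
    apply Summable.of_abs
    exact Summable.of_nonneg_of_le (fun k => abs_nonneg _) habs sumK1
  have hT1 : (∑' k : ℕ, y k * (∑ j ∈ Finset.range k, z ^ j)) < 1 := by
    have := Summable.tsum_le_tsum (fun k => (le_abs_self _).trans (habs k)) hsumT sumK1
    linarith
  have hid : (∑' k : ℕ, y k * z ^ k)
      = z + (1 - z) * (1 - ∑' k : ℕ, y k * (∑ j ∈ Finset.range k, z ^ j)) := by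
    have h1 : ∀ k : ℕ, y k * z ^ k
        = y k * z + (1 - z) * (y k - y k * (∑ j ∈ Finset.range k, z ^ j)) := by
      intro k
      have hg : (∑ j ∈ Finset.range k, z ^ j) * (z - 1) = z ^ k - 1 := geom_sum_mul z k
      linear_combination (-(y k)) * hg
    rw [tsum_congr h1, Summable.tsum_add (sumy.mul_right z) ((sumy.sub hsumT).mul_left (1 - z)),
      tsum_mul_right, tsum_mul_left, Summable.tsum_sub sumy hsumT, hY1, one_mul]
  have hden : z < ∑' k : ℕ, y k * z ^ k := by
    rw [hid]
    nlinarith [hT1]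
  -- Numerator
  have hnum : 0 < w * (∑' k : ℕ, y k * z ^ k) - z * (∑' k : ℕ, y k * w ^ k) := by
    rcases le_or_gt z 0 with hz0 | hz0
    · -- z ≤ 0: termwise nonneg, first term positive
      have hid2 : w * (∑' k : ℕ, y k * z ^ k) - z * (∑' k : ℕ, y k * w ^ k)
          = ∑' k : ℕ, (w * (y k * z ^ k) - z * (y k * w ^ k)) := by
        rw [Summable.tsum_sub (sumYz.mul_left w) (sumYw.mul_left z), tsum_mul_left, tsum_mul_left]
      rw [hid2]
      apply Summable.tsum_pos ((sumYz.mul_left w).sub (sumYw.mul_left z)) ?_ 0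
      · simp only [pow_zero, mul_one]
        nlinarith [hy0]
      · intro k
        cases k with
        | zero => simp only [pow_zero, mul_one]; nlinarith [hy 0]
        | succ n =>
          have hzw : |z| ≤ w := by rw [abs_le]; constructor <;> linarith
          have h1 : |z| ^ n ≤ w ^ n := pow_le_pow_left₀ (abs_nonneg z) hzw n
          have h2 : -(|z| ^ (n + 1)) ≤ z ^ (n + 1) := by
            rw [← abs_pow]; exact neg_abs_le _
          have hyk := hy (n + 1)
          have hw0 : (0:ℝ) < w := by linarith
          have e1 : w * |z| ^ (n + 1) ≤ |z| * w ^ (n + 1) := by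
            have h1' := mul_le_mul_of_nonneg_left h1 (mul_nonneg hw0.le (abs_nonneg z))
            calc w * |z| ^ (n + 1) = (w * |z|) * |z| ^ n := by ring
              _ ≤ (w * |z|) * w ^ n := h1'
              _ = |z| * w ^ (n + 1) := by ring
          have hA : z * (y (n + 1) * w ^ (n + 1)) = -(|z| * (y (n + 1) * w ^ (n + 1))) := by
            rw [abs_of_nonpos hz0]; ring
          have h2w := mul_le_mul_of_nonneg_left h2 (mul_nonneg hyk hw0.le)
          have e1y := mul_le_mul_of_nonneg_left e1 hyk
          linarith [h2w, e1y, hA]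
    · -- 0 < z: use Y(w) ≤ w and z < Y(z)
      -- step 1: monotone comparison at s
      have hmono : (∑' k : ℕ, ((k : ℝ) * y k * w ^ k - y k * w ^ k))
          ≤ ∑' k : ℕ, ((k : ℝ) * y k * s ^ k - y k * s ^ k) := by
        apply Summable.tsum_le_tsum ?_ ((hsumK w (by linarith) hwR).sub sumYw)
          ((hsumK s hs0 hsR).sub sumYs)
        intro k
        have hpow : w ^ k ≤ s ^ k := pow_le_pow_left₀ (by linarith) hws.le k
        cases k with
        | zero => simp
        | succ n =>
          have h := mul_le_mul_of_nonneg_left hpow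
            (mul_nonneg (Nat.cast_nonneg n) (hy (n + 1)))
          push_cast
          linarith [h]
      have hhs' : (∑' k : ℕ, (k : ℝ) * y k * s ^ k) - (∑' k : ℕ, y k * s ^ k) ≤ 0 := by
        rw [← hkey s]; exact hhs
      have hhw : (∑' k : ℕ, (k : ℝ) * y k * w ^ k) ≤ ∑' k : ℕ, y k * w ^ k := by
        have e1 := Summable.tsum_sub (hsumK w (by linarith) hwR) sumYw
        have e2 := Summable.tsum_sub (hsumK s hs0 hsR) sumYs
        rw [e1, e2] at hmono
        linarith
      -- step 2: convexity bound
      have hconvx : w * ((∑' k : ℕ, y k * w ^ k) - 1)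
          ≤ (w - 1) * ∑' k : ℕ, (k : ℝ) * y k * w ^ k := by
        have hterm : ∀ k : ℕ, w * (y k * w ^ k - y k)
            ≤ (w - 1) * ((k : ℝ) * y k * w ^ k) := by
          intro k
          have hg : (∑ j ∈ Finset.range k, w ^ j) * (w - 1) = w ^ k - 1 := geom_sum_mul w k
          have hwG : w * (∑ j ∈ Finset.range k, w ^ j) ≤ (k : ℝ) * w ^ k := by
            rw [Finset.mul_sum]
            calc ∑ j ∈ Finset.range k, w * w ^ j ≤ ∑ _j ∈ Finset.range k, w ^ k := by
                  apply Finset.sum_le_sum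
                  intro j hj
                  rw [← pow_succ']
                  exact pow_le_pow_right₀ hw1.le (Finset.mem_range.mp hj)
              _ = (k : ℝ) * w ^ k := by
                  rw [Finset.sum_const, Finset.card_range, nsmul_eq_mul]
          have hp := mul_le_mul_of_nonneg_left hwG
            (mul_nonneg (hy k) (by linarith : (0:ℝ) ≤ w - 1))
          have hg' : w * y k * ((∑ j ∈ Finset.range k, w ^ j) * (w - 1))
              = w * y k * (w ^ k - 1) := by rw [hg]
          linarith [hp, hg']
        have := Summable.tsum_le_tsum hterm ((sumYw.sub sumy).mul_left w)
          ((hsumK w (by linarith) hwR).mul_left (w - 1))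
        rw [tsum_mul_left, tsum_mul_left, Summable.tsum_sub sumYw sumy, hY1] at this
        exact this
      have hBw : (∑' k : ℕ, y k * w ^ k) ≤ w := by
        have h3 : (w - 1) * (∑' k : ℕ, (k : ℝ) * y k * w ^ k)
            ≤ (w - 1) * ∑' k : ℕ, y k * w ^ k :=
          mul_le_mul_of_nonneg_left hhw (by linarith)
        linarith [hconvx, h3]
      have m1 := mul_lt_mul_of_pos_left hden (by linarith : (0:ℝ) < w)
      have m2 := mul_le_mul_of_nonneg_left hBw hz0.le
      linarith [m1, m2]
  exact div_pos hnum (by linarith [hden])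
end

section
/- Let $Y$ be a PGF with $Y'(1) < 1$, $y_0 > 0$, $t_0 > 1$, and let $\epsilon \in (0, t_0 - 1)$. For all complex $z$ with $|z| = 1+\epsilon$ and real $w \in [0,1]$, the value $Q(z,w) = \frac{wY(z) - zY(w)}{Y(z) - z}$ is well-defined (i.e. $Y(z) \ne z$) and does not lie in the interval $(-\infty, 0]$. -/
/-!
Write `Y(t) = ∑ y k * t ^ k` and `u = 1 + ε`. Since `u < t₀`, some `s > u` has
`s Y'(s) - Y(s) ≤ 0`; as `t Y'(t) - Y(t) = ∑ (k - 1) y k t ^ k` is nondecreasing, also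
`u Y'(u) ≤ Y(u)`. Summing the convexity inequality for `t ↦ t ^ (k - 1)` against `y k`, strict at
`k = 0` because `y 0 > 0`, turns this into `Y(u) < u`, so `‖Y(z)‖ ≤ Y(u) < ‖z‖`. Bernoulli's
inequality and `Y'(1) < 1` give `Y(w) ≥ w`, and `Y(w) ≥ y 0 > 0`. Now `Q(z,w) = a ≤ 0` means
`(w - a) Y(z) = z (Y(w) - a)`, and taking norms yields
`‖z‖ (Y(w) - a) ≤ (Y(w) - a) ‖Y(z)‖ < ‖z‖ (Y(w) - a)`.
-/

open Set

lemma Real.exists_mem_gt_of_nonneg_lt_sSup {S : Set ℝ} {b : ℝ} (hb : 0 ≤ b) (h : b < sSup S) :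
    ∃ s ∈ S, b < s :=
  exists_lt_of_lt_csSup
    (nonempty_iff_ne_empty.2 fun hS => by rw [hS, Real.sSup_empty] at h; linarith) h

/-- The tangent-line inequality at `u` for the convex function `t ↦ t ^ (k - 1)`, evaluated at `1`
and multiplied by `u ^ 2`. -/
lemma mul_pow_sub_self_le {u : ℝ} (hu : 0 < u) (k : ℕ) :
    u * (u ^ k - u) ≤ ((k : ℝ) - 1) * (u - 1) * u ^ k := by
  rcases k with _ | n
  · simp only [pow_zero, CharP.cast_eq_zero]
    nlinarith [sq_nonneg (u - 1)]
  · have hb := one_add_mul_sub_le_pow (a := u⁻¹) (by linarith [inv_pos.2 hu]) n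
    have hscale := mul_le_mul_of_nonneg_left hb (pow_pos hu (n + 2)).le
    have hinv : u ^ (n + 2) * u⁻¹ = u ^ (n + 1) := by field_simp; ring
    have hpow : u ^ (n + 2) * u⁻¹ ^ n = u ^ 2 := by
      rw [inv_pow, ← div_eq_mul_inv, div_eq_iff (pow_ne_zero _ hu.ne')]; ring
    have hscaled : u ^ (n + 2) + n * (u ^ (n + 1) - u ^ (n + 2)) ≤ u ^ 2 := by
      rw [← hinv, ← hpow]; linear_combination hscale
    push_cast
    linear_combination hscaled

section PowerSeries

variable {y : ℕ → ℝ}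

lemma hasSum_sub_one_mul_mul_pow {t : ℝ}
    (hd : Summable fun k : ℕ => (k : ℝ) * y k * t ^ (k - 1))
    (hY : Summable fun k : ℕ => y k * t ^ k) :
    HasSum (fun k : ℕ => ((k : ℝ) - 1) * y k * t ^ k)
      ((∑' k : ℕ, (k : ℝ) * y k * t ^ (k - 1)) * t - ∑' k : ℕ, y k * t ^ k) := by
  refine ((hd.hasSum.mul_right t).sub hY.hasSum).congr_fun fun k => ?_
  rcases k with _ | n
  · simp
  · simp only [Nat.add_sub_cancel, pow_succ]; ring

lemma tsum_sub_one_mul_mul_pow_mono (hy : ∀ k, 0 ≤ y k) {u s : ℝ} (hu : 0 ≤ u) (hus : u ≤ s)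
    (hsum_u : Summable fun k : ℕ => ((k : ℝ) - 1) * y k * u ^ k)
    (hsum_s : Summable fun k : ℕ => ((k : ℝ) - 1) * y k * s ^ k) :
    ∑' k : ℕ, ((k : ℝ) - 1) * y k * u ^ k ≤ ∑' k : ℕ, ((k : ℝ) - 1) * y k * s ^ k := by
  refine hsum_u.tsum_le_tsum (fun k => ?_) hsum_s
  rcases k with _ | n
  · simp
  · have hn : (0 : ℝ) ≤ ((n + 1 : ℕ) : ℝ) - 1 := by push_cast; linarith
    gcongr
    exact mul_nonneg hn (hy _)

lemma tsum_mul_pow_lt_self (hy : ∀ k, 0 ≤ y k) (hy0 : 0 < y 0) (hY1 : HasSum y 1) {u : ℝ}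
    (hu : 1 < u) (hYu : Summable fun k : ℕ => y k * u ^ k)
    (hg : Summable fun k : ℕ => ((k : ℝ) - 1) * y k * u ^ k)
    (hg0 : ∑' k : ℕ, ((k : ℝ) - 1) * y k * u ^ k ≤ 0) :
    ∑' k : ℕ, y k * u ^ k < u := by
  have hlt : u * (∑' k : ℕ, y k * u ^ k - u) < (u - 1) * ∑' k : ℕ, ((k : ℝ) - 1) * y k * u ^ k := by
    have hlhs : HasSum (fun k : ℕ => y k * (u * (u ^ k - u)))
        (u * (∑' k : ℕ, y k * u ^ k - 1 * u)) :=
      ((hYu.hasSum.sub (hY1.mul_right u)).mul_left u).congr_fun fun k => by ring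
    have hrhs : HasSum (fun k : ℕ => y k * (((k : ℝ) - 1) * (u - 1) * u ^ k))
        ((u - 1) * ∑' k : ℕ, ((k : ℝ) - 1) * y k * u ^ k) :=
      (hg.hasSum.mul_left (u - 1)).congr_fun fun k => by ring
    rw [one_mul] at hlhs
    refine hasSum_lt (i := 0) (fun k => ?_) ?_ hlhs hrhs
    · exact mul_le_mul_of_nonneg_left (mul_pow_sub_self_le (by linarith) k) (hy k)
    · simp only [pow_zero, CharP.cast_eq_zero]
      nlinarith [mul_pos hy0 (mul_pos (by linarith : (0 : ℝ) < u - 1) (by linarith : (0 : ℝ) < u - 1))]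
  nlinarith [mul_nonpos_of_nonneg_of_nonpos (by linarith : (0 : ℝ) ≤ u - 1) hg0]

lemma self_le_tsum_mul_pow (hy : ∀ k, 0 ≤ y k) (hY1 : HasSum y 1) {m : ℝ}
    (hm : HasSum (fun k : ℕ => (k : ℝ) * y k) m) (hm1 : m ≤ 1) {w : ℝ} (hw0 : 0 ≤ w) (hw1 : w ≤ 1) :
    w ≤ ∑' k : ℕ, y k * w ^ k := by
  have hYw : Summable fun k : ℕ => y k * w ^ k :=
    hY1.summable.of_nonneg_of_le (fun k => mul_nonneg (hy k) (pow_nonneg hw0 k))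
      fun k => mul_le_of_le_one_right (hy k) (pow_le_one₀ hw0 hw1)
  have hbernoulli : 1 + m * (w - 1) ≤ ∑' k : ℕ, y k * w ^ k := by
    refine hasSum_le (f := fun k : ℕ => y k + (k : ℝ) * y k * (w - 1)) (fun k => ?_) ?_ hYw.hasSum
    · have := mul_le_mul_of_nonneg_left
        (one_add_mul_sub_le_pow (by linarith : (-1 : ℝ) ≤ w) k) (hy k)
      linarith
    · exact hY1.add (hm.mul_right (w - 1))
  nlinarith

lemma norm_tsum_ofReal_mul_pow_le (hy : ∀ k, 0 ≤ y k) {z : ℂ}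
    (hsum : Summable fun k : ℕ => y k * ‖z‖ ^ k) :
    ‖∑' k : ℕ, (y k : ℂ) * z ^ k‖ ≤ ∑' k : ℕ, y k * ‖z‖ ^ k := by
  have hnorm (k : ℕ) : ‖(y k : ℂ) * z ^ k‖ = y k * ‖z‖ ^ k := by
    rw [norm_mul, norm_pow, Complex.norm_real, Real.norm_of_nonneg (hy k)]
  simp_rw [← hnorm] at hsum ⊢
  exact norm_tsum_le_tsum_norm hsum

end PowerSeries

lemma mul_sub_mul_div_sub_ne_ofReal {A z : ℂ} {w W a : ℝ} (hA : ‖A‖ < ‖z‖) (hw : 0 ≤ w)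
    (hwW : w ≤ W) (hW : 0 < W) (ha : a ≤ 0) :
    ((w : ℂ) * A - z * W) / (A - z) ≠ a := by
  intro h
  have hAz : A - z ≠ 0 := sub_ne_zero.2 fun h => hA.ne (by rw [h])
  rw [div_eq_iff hAz] at h
  have key : ((w - a : ℝ) : ℂ) * A = z * ((W - a : ℝ) : ℂ) := by
    push_cast; linear_combination h
  have hnorm := congrArg norm key
  rw [norm_mul, norm_mul, Complex.norm_real, Complex.norm_real, Real.norm_of_nonneg (by linarith),
    Real.norm_of_nonneg (by linarith)] at hnorm
  have : (W - a) * ‖z‖ < (W - a) * ‖z‖ := calc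
    (W - a) * ‖z‖ = (w - a) * ‖A‖ := by rw [hnorm]; ring
    _ ≤ (W - a) * ‖A‖ := by gcongr
    _ < (W - a) * ‖z‖ := by gcongr; linarith
  exact this.false

theorem fctl_Q_avoids_negatives_general (y : ℕ → ℝ) (R : ℝ)
    (hy : ∀ k, 0 ≤ y k) (hy0 : 0 < y 0)
    (hconv : ∀ z : ℂ, ‖z‖ < R → Summable (fun k : ℕ => (y k : ℂ) * z ^ k))
    (hconv' : ∀ t : ℝ, 0 < t → t < R →
      Summable (fun k : ℕ => (k : ℝ) * y k * t ^ (k - 1)))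
    (hY1 : ∑' k : ℕ, y k = 1) (hY'1 : ∑' k : ℕ, (k : ℝ) * y k < 1)
    (t0 : ℝ)
    (ht0 : t0 = sSup {t : ℝ | t ∈ Ioo 0 R ∧
      (∑' k : ℕ, (k : ℝ) * y k * t ^ (k - 1)) * t - (∑' k : ℕ, y k * t ^ k) ≤ 0})
    (ε : ℝ) (hε : 0 < ε) (hεt0 : ε < t0 - 1)
    (z : ℂ) (hz : ‖z‖ = 1 + ε)
    (w : ℝ) (hw0 : 0 ≤ w) (hw1 : w ≤ 1) :
    (∑' k : ℕ, (y k : ℂ) * z ^ k) ≠ z ∧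
    ∀ a : ℝ, a ≤ 0 →
      ((w : ℂ) * (∑' k : ℕ, (y k : ℂ) * z ^ k) - z * (∑' k : ℕ, (y k : ℂ) * (w : ℂ) ^ k)) /
        ((∑' k : ℕ, (y k : ℂ) * z ^ k) - z) ≠ (a : ℂ) := by
  obtain ⟨s, ⟨⟨hs0, hsR⟩, hgs⟩, hus⟩ :=
    Real.exists_mem_gt_of_nonneg_lt_sSup (by linarith : 0 ≤ 1 + ε)
      (ht0 ▸ (by linarith : 1 + ε < t0))
  have hsummable (r : ℝ) (hr0 : 0 ≤ r) (hrR : r < R) : Summable fun k : ℕ => y k * r ^ k := by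
    refine Complex.summable_ofReal.1 ((hconv r ?_).congr fun k => by push_cast; rfl)
    rwa [Complex.norm_real, Real.norm_of_nonneg hr0]
  have hg (r : ℝ) (hr0 : 0 < r) (hrR : r < R) :=
    hasSum_sub_one_mul_mul_pow (hconv' r hr0 hrR) (hsummable r hr0.le hrR)
  have hu : 1 < 1 + ε := by linarith
  have huR : 1 + ε < R := hus.trans hsR
  have hgu : ∑' k : ℕ, ((k : ℝ) - 1) * y k * (1 + ε) ^ k ≤ 0 :=
    (tsum_sub_one_mul_mul_pow_mono hy (by linarith) hus.le (hg _ (by linarith) huR).summable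
      (hg s hs0 hsR).summable).trans ((hg s hs0 hsR).tsum_eq ▸ hgs)
  have hYsum : HasSum y 1 := by
    simpa [hY1] using (hsummable 1 zero_le_one (hu.trans huR)).hasSum
  have hYu := tsum_mul_pow_lt_self hy hy0 hYsum hu (hsummable _ (by linarith) huR)
    (hg _ (by linarith) huR).summable hgu
  have hYz : ‖∑' k : ℕ, (y k : ℂ) * z ^ k‖ < ‖z‖ := by
    have hnorm := norm_tsum_ofReal_mul_pow_le hy (z := z) (hz ▸ hsummable _ (by linarith) huR)
    rw [hz] at hnorm ⊢
    exact hnorm.trans_lt hYu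
  have hYw : w ≤ ∑' k : ℕ, y k * w ^ k := by
    have hm := (hconv' 1 one_pos (hu.trans huR)).hasSum
    simp only [one_pow, mul_one] at hm
    exact self_le_tsum_mul_pow hy hYsum hm hY'1.le hw0 hw1
  have hYw0 : 0 < ∑' k : ℕ, y k * w ^ k := hy0.trans_le <| by
    simpa using (hsummable w hw0 (by linarith)).le_tsum 0
      fun k _ => mul_nonneg (hy k) (pow_nonneg hw0 k)
  have hcast : ∑' k : ℕ, (y k : ℂ) * (w : ℂ) ^ k = ((∑' k : ℕ, y k * w ^ k : ℝ) : ℂ) := by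
    push_cast; rfl
  refine ⟨fun h => hYz.ne (by rw [h]), fun a ha => ?_⟩
  rw [hcast]
  exact mul_sub_mul_div_sub_ne_ofReal hYz hw0 hYw hYw0 ha

/-- for `|z| = 1+ε` (with `0 < ε < t₀-1`) and real `w ∈ [0,1]`,
`Q(z,w) = (wY(z)-zY(w))/(Y(z)-z)` is well defined (`Y(z) ≠ z`) and avoids
the half-line `(-∞,0]`. -/
theorem fctl_Q_avoids_negatives (y : ℕ → ℝ) (R : ℝ) (hR : 1 < R)
    (hy : ∀ k, 0 ≤ y k) (hy0 : 0 < y 0)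
    (hconv : ∀ z : ℂ, ‖z‖ < R → Summable (fun k : ℕ => (y k : ℂ) * z ^ k))
    (hconv' : ∀ t : ℝ, 0 < t → t < R →
      Summable (fun k : ℕ => (k : ℝ) * y k * t ^ (k - 1)))
    (hY1 : ∑' k : ℕ, y k = 1) (hY'1 : ∑' k : ℕ, (k : ℝ) * y k < 1)
    (t0 : ℝ)
    (ht0 : t0 = sSup {t : ℝ | t ∈ Ioo 0 R ∧
      (∑' k : ℕ, (k : ℝ) * y k * t ^ (k - 1)) * t - (∑' k : ℕ, y k * t ^ k) ≤ 0})
    (ht0gt : 1 < t0)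
    (ε : ℝ) (hε : 0 < ε) (hεt0 : ε < t0 - 1)
    (z : ℂ) (hz : ‖z‖ = 1 + ε)
    (w : ℝ) (hw0 : 0 ≤ w) (hw1 : w ≤ 1) :
    (∑' k : ℕ, (y k : ℂ) * z ^ k) ≠ z ∧
    ∀ a : ℝ, a ≤ 0 →
      ((w : ℂ) * (∑' k : ℕ, (y k : ℂ) * z ^ k) - z * (∑' k : ℕ, (y k : ℂ) * (w : ℂ) ^ k)) /
        ((∑' k : ℕ, (y k : ℂ) * z ^ k) - z) ≠ (a : ℂ) :=
  fctl_Q_avoids_negatives_general y R hy hy0 hconv hconv' hY1 hY'1 t0 ht0 ε hε hεt0 z hz w hw0 hw1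
end
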